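/- Let G be a triangle-free graph. If there exist constants such that every triangle-free graph H of maximum degree Δ satisfies χ⃗(H) ≤ (1+ε)·Δ/(2 ln Δ) for Δ large, then every triangle-free graph G of order n satisfies χ⃗(G) ≤ (1+o(1))·√(2n/ln n) as n → ∞. In particular, for every ε > 0 there exists n₀ such that for all n ≥ n₀ and every triangle-free graph G of order n, χ⃗(G) ≤ (1+ε)·√(2n/ln n) + C for some constant C depending only on ε. -/

import Mathlib

open Set

variable {V : Type*}

/-- A directed cycle within a set `S` under arc relation `A`. -/
def DiCycleIn (A : V → V → Prop) (S : Set V) : Prop :=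
  ∃ (n : ℕ) (f : Fin (n + 1) → V), Function.Injective f ∧ (∀ i, f i ∈ S) ∧
    ∀ i, A (f i) (f (i + 1))

/-- `S` induces an acyclic subdigraph of the digraph with arc relation `A`. -/
def AcyclicSet (A : V → V → Prop) (S : Set V) : Prop := ¬ DiCycleIn A S

/-- A `k`-dicolouring: every colour class is acyclic. -/
def Dicolourable (A : V → V → Prop) (k : ℕ) : Prop :=
  ∃ φ : V → Fin k, ∀ c, AcyclicSet A {v | φ v = c}

/-- Dichromatic number of a digraph. -/
noncomputable def dichrNum (A : V → V → Prop) : ℕ := sInf {k | Dicolourable A k}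

/-- Chromatic number of a simple graph, as a natural number. -/
noncomputable def chrNum (G : SimpleGraph V) : ℕ := sInf {k | G.Colorable k}

/-- `A` is an orientation of the simple graph `G`. -/
def IsOrientation (G : SimpleGraph V) (A : V → V → Prop) : Prop :=
  (∀ u v, G.Adj u v ↔ A u v ∨ A v u) ∧ ∀ u v, A u v → ¬ A v u

/-- The maximum dichromatic number over all orientations of `G`. -/
noncomputable def maxDichr (G : SimpleGraph V) : ℕ :=
  sSup {k | ∃ A : V → V → Prop, IsOrientation G A ∧ dichrNum A = k}

/-- The backedge graph of a digraph `A` with respect to a total order `L`. -/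
def backedge (A : V → V → Prop) (L : LinearOrder V) : SimpleGraph V where
  Adj u v := (A v u ∧ L.lt u v) ∨ (A u v ∧ L.lt v u)
  symm := ⟨by intro u v h; tauto⟩
  loopless := ⟨by
    intro u h
    rcases h with ⟨_, h⟩ | ⟨_, h⟩ <;> exact @lt_irrefl V L.toPreorder u h⟩

/-- An oriented graph: no pair of opposite arcs (hence no loops). -/
def Oriented (A : V → V → Prop) : Prop := ∀ u v, A u v → ¬ A v u

/-- The underlying graph of the digraph `A` is triangle-free. -/
def TriangleFreeDi (A : V → V → Prop) : Prop :=
  ∀ a b c : V, (A a b ∨ A b a) → (A b c ∨ A c b) → (A a c ∨ A c a) → False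

/-- A directed linear forest: in- and out-degrees at most one, and no directed cycle. -/
def IsDilinForest (B : V → V → Prop) : Prop :=
  (∀ u v w, B u v → B u w → v = w) ∧ (∀ u v w, B u w → B v w → u = v) ∧
    AcyclicSet B Set.univ

/-- The number of arcs of a digraph. -/
noncomputable def arcCount (B : V → V → Prop) : ℕ := Set.ncard {p : V × V | B p.1 p.2}

/-- The maximum number of arcs of a directed linear forest subdigraph of `A`. -/
noncomputable def linArcs (A : V → V → Prop) : ℕ :=
  sSup {m | ∃ B : V → V → Prop, (∀ u v, B u v → A u v) ∧ IsDilinForest B ∧ arcCount B = m}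

/-- Independence number of a simple graph. -/
noncomputable def indepNum (G : SimpleGraph V) : ℕ :=
  sSup {k | ∃ S : Set V, (∀ u ∈ S, ∀ v ∈ S, ¬ G.Adj u v) ∧ S.ncard = k}

/-- The `n`-backward-blowup of a digraph `A`. -/
def backBlowup (A : V → V → Prop) (n : ℕ) : V × Fin n → V × Fin n → Prop :=
  fun p q => (A p.1 q.1 ∧ p.2 = q.2) ∨ (A q.1 p.1 ∧ p.2 ≠ q.2)

lemma sqrt_two_mul_div (x L : ℝ) (hx : 0 ≤ x) (hL : 0 < L) :
    Real.sqrt (2 * x * L) = Real.sqrt (2 * x / L) * L := by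
  rw [show 2 * x * L = (2 * x / L) * L ^ 2 by field_simp,
    Real.sqrt_mul (by positivity), Real.sqrt_sq hL.le]

set_option maxHeartbeats 1000000 in
lemma kai {ε : ℝ} (hε : 0 < ε) {m n : ℕ} (hm2 : 2 ≤ m) (hmn : (m : ℝ) ≤ n)
    (hmlog : (1 + ε) / ε ≤ Real.log m)
    (hgap : Real.sqrt (2 * n * Real.log n) ≤ (n : ℝ) - m) :
    (1 + ε) * Real.sqrt (2 * m / Real.log m) + 1 ≤
      (1 + ε) * Real.sqrt (2 * n / Real.log n) := by
  have hmpos : (0 : ℝ) < m := by positivity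
  have hnpos : (0 : ℝ) < n := lt_of_lt_of_le hmpos hmn
  set Lm := Real.log m with hLm
  set Ln := Real.log n with hLn
  have hLm1 : 1 < Lm := by
    refine lt_of_lt_of_le ?_ hmlog
    rw [lt_div_iff₀ hε]; linarith
  have hLmLn : Lm ≤ Ln := Real.log_le_log hmpos hmn
  have hLn1 : 1 < Ln := lt_of_lt_of_le hLm1 hLmLn
  have hLmpos : 0 < Lm := by linarith
  have hLnpos : 0 < Ln := by linarith
  set a := Real.sqrt (2 * m / Lm) with ha
  set b := Real.sqrt (2 * n / Ln) with hb
  have ha0 : 0 ≤ a := Real.sqrt_nonneg _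
  have hb0 : 0 ≤ b := Real.sqrt_nonneg _
  have ha2 : a ^ 2 = 2 * m / Lm := Real.sq_sqrt (by positivity)
  have hb2 : b ^ 2 = 2 * n / Ln := Real.sq_sqrt (by positivity)
  have hbpos : 0 < b := Real.sqrt_pos.mpr (by positivity)
  have hbeq : Real.sqrt (2 * n * Ln) = b * Ln := sqrt_two_mul_div _ _ hnpos.le hLnpos
  have hgap' : b * Ln ≤ (n : ℝ) - m := hbeq ▸ hgap
  have hnm : 0 < (n : ℝ) - m := lt_of_lt_of_le (by positivity) hgap'
  -- log difference bound, multiplied by m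
  have hmd : (m : ℝ) * (Ln - Lm) ≤ (n : ℝ) - m := by
    have h1 : Real.log ((n : ℝ) / m) ≤ (n : ℝ) / m - 1 :=
      Real.log_le_sub_one_of_pos (by positivity)
    rw [Real.log_div (by positivity) (by positivity)] at h1
    have h2 : (m : ℝ) * ((n:ℝ)/m - 1) = (n : ℝ) - m := by field_simp
    nlinarith [h1, hmpos]
  have e1 : b ^ 2 * (Lm * Ln) = 2 * (n : ℝ) * Lm := by
    rw [hb2]; field_simp
  have e2 : a ^ 2 * (Lm * Ln) = 2 * (m : ℝ) * Ln := by
    rw [ha2]; field_simp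
  have hkey : (b ^ 2 - a ^ 2) * (Lm * Ln) ≥ 2 * ((n : ℝ) - m) * (Lm - 1) := by
    nlinarith [e1, e2, hmd]
  have hsq : a ^ 2 < b ^ 2 := by
    nlinarith [hkey, mul_pos hnm (show (0:ℝ) < Lm - 1 by linarith),
      mul_pos hLmpos hLnpos]
  have hab : a < b := lt_of_pow_lt_pow_left₀ 2 hb0 hsq
  have h1 : (b - a) * (b + a) * (Lm * Ln) ≥ 2 * (b * Ln) * (Lm - 1) := by
    calc (b - a) * (b + a) * (Lm * Ln) = (b ^ 2 - a ^ 2) * (Lm * Ln) := by ring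
    _ ≥ 2 * ((n : ℝ) - m) * (Lm - 1) := hkey
    _ ≥ 2 * (b * Ln) * (Lm - 1) :=
        mul_le_mul_of_nonneg_right (by linarith) (by linarith)
  have hfac : 0 ≤ (b - a) * (Lm * Ln) := by
    apply mul_nonneg (by linarith) (by positivity)
  have h2 : ((b - a) * (Lm * Ln)) * (b + a) ≤ ((b - a) * (Lm * Ln)) * (2 * b) :=
    mul_le_mul_of_nonneg_left (by linarith) hfac
  have h3 : (Lm - 1) * (2 * b * Ln) ≤ ((b - a) * Lm) * (2 * b * Ln) := by
    have e3 : ((b - a) * (Lm * Ln)) * (2 * b) = ((b - a) * Lm) * (2 * b * Ln) := by ring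
    have e4 : ((b - a) * (Lm * Ln)) * (b + a) = (b - a) * (b + a) * (Lm * Ln) := by ring
    linarith [h1, h2, e3, e4]
  have hstep : Lm - 1 ≤ (b - a) * Lm :=
    le_of_mul_le_mul_right h3 (by positivity)
  have hfin : (1 + ε) ≤ ε * Lm := by
    have := (div_le_iff₀ hε).mp hmlog
    linarith [this]
  -- conclude
  have hmain : 1 ≤ (1 + ε) * (b - a) := by
    have h4 : (1 + ε) * (Lm - 1) ≥ Lm := by linarith [hfin]
    have h5 : (1 + ε) * ((b - a) * Lm) ≥ (1 + ε) * (Lm - 1) :=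
      mul_le_mul_of_nonneg_left hstep (by linarith)
    have e5 : (1 + ε) * ((b - a) * Lm) = ((1 + ε) * (b - a)) * Lm := by ring
    have h6 : ((1 + ε) * (b - a)) * Lm ≥ 1 * Lm := by linarith [h5, e5]
    exact le_of_mul_le_mul_right (by linarith [h6]) hLmpos
  linarith [hmain]

section aux
variable {W : Type*}

lemma acyclic_of_no_arcs (A : W → W → Prop) (S : Set W)
    (h : ∀ u ∈ S, ∀ v ∈ S, ¬ A u v) : AcyclicSet A S := by
  rintro ⟨n, f, hinj, hmem, harc⟩
  exact h _ (hmem 0) _ (hmem 1) (by simpa using harc 0)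

lemma dicolourable_card [Fintype W] (A : W → W → Prop) (hA : Oriented A) :
    Dicolourable A (Fintype.card W) := by
  refine ⟨fun v => (Fintype.equivFin W) v, fun c => ?_⟩
  apply acyclic_of_no_arcs
  intro u hu v hv hAuv
  have : u = v := (Fintype.equivFin W).injective (hu.trans hv.symm)
  exact hA u v hAuv (this ▸ hAuv)

lemma dichrNum_le_card [Fintype W] (A : W → W → Prop) (hA : Oriented A) :
    dichrNum A ≤ Fintype.card W :=
  Nat.sInf_le (dicolourable_card A hA)

lemma maxDichr_le_card [Fintype W] (G : SimpleGraph W) :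
    maxDichr G ≤ Fintype.card W := by
  apply csSup_le'
  rintro k ⟨A, hA, rfl⟩
  exact dichrNum_le_card A hA.2

lemma bdd_dichr_set [Fintype W] (G : SimpleGraph W) :
    BddAbove {k | ∃ A : W → W → Prop, IsOrientation G A ∧ dichrNum A = k} := by
  refine ⟨Fintype.card W, ?_⟩
  rintro k ⟨A, hA, rfl⟩
  exact dichrNum_le_card A hA.2

lemma removal [Fintype W] (G : SimpleGraph W) (S : Set W)
    (hS : ∀ u ∈ S, ∀ v ∈ S, ¬ G.Adj u v) :
    maxDichr G ≤ maxDichr (G.induce Sᶜ) + 1 := by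
  classical
  apply csSup_le'
  rintro k ⟨A, hA, rfl⟩
  set A' : (Sᶜ : Set W) → (Sᶜ : Set W) → Prop := fun u v => A u.1 v.1 with hA'def
  have horA' : Oriented A' := fun u v h => hA.2 _ _ h
  have hA' : IsOrientation (G.induce Sᶜ) A' := by
    constructor
    · intro u v
      simpa using hA.1 u.1 v.1
    · exact horA'
  have hnoarc : ∀ u ∈ S, ∀ v ∈ S, ¬ A u v := by
    intro u hu v hv hAuv
    by_cases huv : u = v
    · exact hA.2 u v hAuv (huv ▸ hAuv)
    · exact hS u hu v hv ((hA.1 u v).mpr (Or.inl hAuv))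
  -- extract optimal colouring of A'
  set k' := dichrNum A' with hk'
  have hne : {k | Dicolourable A' k}.Nonempty :=
    ⟨Fintype.card (Sᶜ : Set W), dicolourable_card A' horA'⟩
  have hmem : Dicolourable A' k' := Nat.sInf_mem hne
  obtain ⟨φ', hφ'⟩ := hmem
  have h1 : dichrNum A ≤ k' + 1 := by
    apply Nat.sInf_le
    refine ⟨fun v => if h : v ∈ S then Fin.last k' else
      (φ' ⟨v, Set.mem_compl h⟩).castSucc, fun c => ?_⟩
    rcases Fin.eq_castSucc_or_eq_last c with ⟨c', rfl⟩ | rfl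
    case _ =>
      rintro ⟨n, f, hinj, hmemf, harc⟩
      have hfS : ∀ i, ∃ h : f i ∉ S, φ' ⟨f i, Set.mem_compl h⟩ = c' := by
        intro i
        have := hmemf i
        simp only [Set.mem_setOf_eq] at this
        by_cases h : f i ∈ S
        · rw [dif_pos h] at this
          exact absurd this.symm ((Fin.castSucc_lt_last _).ne)
        · rw [dif_neg h] at this
          exact ⟨h, Fin.castSucc_injective _ this⟩
      refine hφ' c' ⟨n, fun i => ⟨f i, Set.mem_compl (hfS i).1⟩, ?_, ?_, ?_⟩
      · intro i j hij
        exact hinj (by simpa using congrArg Subtype.val hij)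
      · intro i
        exact (hfS i).2
      · intro i
        exact harc i
    case _ =>
      -- colour class is inside S
      apply acyclic_of_no_arcs
      intro u hu v hv
      simp only [Set.mem_setOf_eq] at hu hv
      have hu' : u ∈ S := by
        by_contra h
        rw [dif_neg h] at hu
        exact (Fin.castSucc_lt_last _).ne hu
      have hv' : v ∈ S := by
        by_contra h
        rw [dif_neg h] at hv
        exact (Fin.castSucc_lt_last _).ne hv
      exact hnoarc u hu' v hv'
  have h2 : k' ≤ maxDichr (G.induce Sᶜ) :=
    le_csSup (bdd_dichr_set _) ⟨A', hA', rfl⟩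
  omega

end aux

set_option maxHeartbeats 1000000 in
/-- From the Johansson–Molloy-type degree bound on the dichromatic number of
triangle-free graphs, deduce `χ⃗(G) ≤ (1+ε)√(2n/ln n) + C` for triangle-free
graphs of order `n`. -/
theorem stmt_16
    (hyp : ∀ ε : ℝ, 0 < ε → ∃ Δ₀ : ℕ, ∀ (W : Type) [Fintype W] (H : SimpleGraph W)
      (Δ : ℕ), H.CliqueFree 3 → (∀ v, (H.neighborSet v).ncard ≤ Δ) → Δ₀ ≤ Δ →
      (maxDichr H : ℝ) ≤ (1 + ε) * Δ / (2 * Real.log Δ)) :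
    ∀ ε : ℝ, 0 < ε → ∃ (n₀ : ℕ) (C : ℝ), ∀ n : ℕ, n₀ ≤ n →
      ∀ (W : Type) [Fintype W] (G : SimpleGraph W), G.CliqueFree 3 →
        Fintype.card W = n →
        (maxDichr G : ℝ) ≤ (1 + ε) * Real.sqrt (2 * n / Real.log n) + C := by
  classical
  intro ε hε
  obtain ⟨Δ₀, hΔ⟩ := hyp (ε / 2) (by positivity)
  set R := (2 + ε) / ε + 1 with hR
  set K := max (Δ₀ ^ 2) (⌈Real.exp R⌉₊ + 3) with hK
  have hK3 : 3 ≤ K := le_trans (by omega) (le_max_right _ _)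
  have hlogK : ∀ p : ℕ, K < p → (2 + ε) / ε + 1 ≤ Real.log p := by
    intro p hp
    have h1 : Real.exp R ≤ (⌈Real.exp R⌉₊ : ℝ) := Nat.le_ceil _
    have h2 : ⌈Real.exp R⌉₊ + 3 ≤ K := le_max_right _ _
    have h3 : (⌈Real.exp R⌉₊ : ℝ) ≤ p := by exact_mod_cast (by omega : ⌈Real.exp R⌉₊ ≤ p)
    have hppos : (0 : ℝ) < p := lt_of_lt_of_le (Real.exp_pos R) (h1.trans h3)
    rw [show (2 + ε) / ε + 1 = R from rfl, Real.le_log_iff_exp_le hppos]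
    linarith
  refine ⟨K + 1, (K : ℝ) + 1, ?_⟩
  suffices main : ∀ n : ℕ, ∀ (W : Type) (_ : Fintype W) (G : SimpleGraph W),
      G.CliqueFree 3 → Fintype.card W = n →
      (maxDichr G : ℝ) ≤ (1 + ε) * Real.sqrt (2 * n / Real.log n) + ((K : ℝ) + 1) by
    intro n _ W instW G hG hcard
    exact main n W instW G hG hcard
  intro n
  induction n using Nat.strong_induction_on with
  | _ n IH =>
  intro W instW G hG hcard
  have hsqrt0 : 0 ≤ Real.sqrt (2 * n / Real.log n) := Real.sqrt_nonneg _
  by_cases hsmall : n ≤ K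
  · have h1 : maxDichr G ≤ n := hcard ▸ maxDichr_le_card G
    have h2 : (maxDichr G : ℝ) ≤ n := by exact_mod_cast h1
    have h3 : (n : ℝ) ≤ K := by exact_mod_cast hsmall
    nlinarith [hε]
  · push_neg at hsmall
    have hLn : (2 + ε) / ε + 1 ≤ Real.log n := hlogK n hsmall
    have hLn1 : 1 < Real.log n := by
      have : (0:ℝ) < (2 + ε) / ε := by positivity
      linarith
    have hLnpos : 0 < Real.log n := by linarith
    have hn2 : 2 ≤ n := by omega
    have hnpos : (0 : ℝ) < n := by positivity
    set b := Real.sqrt (2 * n / Real.log n) with hb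
    have hb1 : 1 ≤ b := by
      rw [hb, show (1:ℝ) = Real.sqrt 1 from (Real.sqrt_one).symm]
      apply Real.sqrt_le_sqrt
      rw [le_div_iff₀ hLnpos]
      have := Real.log_le_sub_one_of_pos hnpos
      linarith
    set D := ⌈Real.sqrt (2 * n * Real.log n)⌉₊ with hD
    have hD_ge : Real.sqrt (2 * n * Real.log n) ≤ (D : ℝ) := Nat.le_ceil _
    have hD_le : (D : ℝ) ≤ Real.sqrt (2 * n * Real.log n) + 1 :=
      (Nat.ceil_lt_add_one (by positivity)).le
    have hsqn : Real.sqrt n ≤ Real.sqrt (2 * n * Real.log n) := by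
      apply Real.sqrt_le_sqrt
      nlinarith [hLn1, hnpos]
    have hΔ₀D : Δ₀ ≤ D := by
      have h0 : Δ₀ ^ 2 ≤ n := le_trans (le_max_left _ _) hsmall.le
      have h1 : (Δ₀ : ℝ) ≤ Real.sqrt n := by
        rw [show ((Δ₀ : ℝ)) = Real.sqrt ((Δ₀ : ℝ) ^ 2) from
          (Real.sqrt_sq (by positivity)).symm]
        apply Real.sqrt_le_sqrt
        exact_mod_cast h0
      have h2 : (Δ₀ : ℝ) ≤ (D : ℝ) := h1.trans (hsqn.trans hD_ge)
      exact_mod_cast h2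
    by_cases hdeg : ∀ v, (G.neighborSet v).ncard ≤ D
    · have hbound := hΔ W G D hG hdeg hΔ₀D
      have hlogD : Real.log n / 2 ≤ Real.log D := by
        calc Real.log n / 2 = Real.log (Real.sqrt n) := (Real.log_sqrt hnpos.le).symm
        _ ≤ Real.log D := Real.log_le_log (Real.sqrt_pos.mpr hnpos)
            (hsqn.trans hD_ge)
      have step1 : (maxDichr G : ℝ) ≤
          (1 + ε / 2) * (Real.sqrt (2 * n * Real.log n) + 1) / Real.log n := by
        refine le_trans hbound ?_
        apply div_le_div₀ (by positivity)
          (mul_le_mul_of_nonneg_left hD_le (by linarith)) hLnpos (by linarith)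
      have step2 : (1 + ε / 2) * (Real.sqrt (2 * n * Real.log n) + 1) / Real.log n ≤
          (1 + ε) * b := by
        rw [sqrt_two_mul_div (n : ℝ) (Real.log n) hnpos.le hLnpos, ← hb,
          div_le_iff₀ hLnpos]
        have hεLn : (1 + ε / 2) ≤ (ε / 2) * Real.log n := by
          have h7 : (2 + ε) / ε ≤ Real.log n - 1 := by linarith
          have h8 := (div_le_iff₀ hε).mp h7
          nlinarith [h8]
        nlinarith [hεLn, mul_nonneg (mul_nonneg (by linarith : (0:ℝ) ≤ ε / 2)
          (by linarith : 0 ≤ b - 1)) hLnpos.le]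
      have : (0:ℝ) ≤ (K : ℝ) + 1 := by positivity
      linarith [step1, step2]
    · push_neg at hdeg
      obtain ⟨v, hv⟩ := hdeg
      set S := G.neighborSet v with hS
      have hSind : ∀ u ∈ S, ∀ w ∈ S, ¬ G.Adj u w := by
        intro u hu w hw hadj
        exact hG {v, u, w} (SimpleGraph.is3Clique_triple_iff.mpr ⟨hu, hw, hadj⟩)
      haveI : Fintype ↥S := (Set.toFinite S).fintype
      haveI : Fintype ↥(Sᶜ) := (Set.toFinite (Sᶜ)).fintype
      set m := Fintype.card ↥(Sᶜ) with hm
      have hcards : m + S.ncard = n := by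
        have h0 := Set.ncard_add_ncard_compl S
        have h1 : (Sᶜ).ncard = m := by
          rw [← Nat.card_coe_set_eq, Nat.card_eq_fintype_card]
        have h2 : Nat.card W = n := by rw [Nat.card_eq_fintype_card, hcard]
        omega
      have hmn : m < n := by
        have h1 : 0 < S.ncard := lt_of_le_of_lt (Nat.zero_le D) hv
        omega
      have hGind : (G.induce (Sᶜ)).CliqueFree 3 :=
        SimpleGraph.CliqueFree.comap (SimpleGraph.Embedding.induce (Sᶜ)).isContained hG
      have hIH := IH m hmn ↥(Sᶜ) _ (G.induce (Sᶜ)) hGind rfl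
      have hremN : maxDichr G ≤ maxDichr (G.induce (Sᶜ)) + 1 := removal G S hSind
      have hrem : (maxDichr G : ℝ) ≤ (maxDichr (G.induce (Sᶜ)) : ℝ) + 1 := by
        exact_mod_cast hremN
      by_cases hmK : m ≤ K
      · have h1 : maxDichr (G.induce (Sᶜ)) ≤ m := maxDichr_le_card _
        have h2 : (maxDichr (G.induce (Sᶜ)) : ℝ) ≤ (K : ℝ) := by
          exact_mod_cast le_trans h1 hmK
        nlinarith [hrem, hsqrt0, hε]
      · push_neg at hmK
        have hmlog : (1 + ε) / ε ≤ Real.log m := by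
          have h1 := hlogK m hmK
          have h2 : (1 + ε) / ε ≤ (2 + ε) / ε := by gcongr; linarith
          linarith
        have hm2 : 2 ≤ m := by omega
        have hmn' : (m : ℝ) ≤ n := by exact_mod_cast hmn.le
        have hgap : Real.sqrt (2 * n * Real.log n) ≤ (n : ℝ) - m := by
          have h1 : (n : ℝ) - m = (S.ncard : ℝ) := by
            have : (m : ℝ) + (S.ncard : ℝ) = n := by exact_mod_cast hcards
            linarith
          rw [h1]
          calc Real.sqrt (2 * n * Real.log n) ≤ (D : ℝ) := hD_ge
          _ ≤ (S.ncard : ℝ) := by exact_mod_cast hv.le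
        have hkai := kai hε hm2 hmn' hmlog hgap
        linarith [hIH, hrem, hkai]
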